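/- (Equation (EqUWd), d-dimensional Ulam-Warburton) Let d >= 1. For the d-dimensional Ulam-Warburton cellular automaton on Z^d, the number u(n) of cells turned ON at stage n satisfies u(0) = 0, u(1) = 1, and, for every n >= 2, u(n) = 2*d * (2*d - 1)^(wt(n-1) - 1). -/

import Mathlib

/-- The binary weight of `n`: the number of 1s in the binary expansion of `n`. -/
def wt (n : ℕ) : ℕ := (Nat.digits 2 n).sum

/-- `q` is one of the `2d` neighbors of `p` in `ℤ^d`: it is obtained from `p`
by changing one coordinate by `+1` or `-1`. -/
def isNbr (d : ℕ) (p q : Fin d → ℤ) : Prop :=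
  ∃ i : Fin d, q = Function.update p i (p i + 1) ∨ q = Function.update p i (p i - 1)

/-!
The cells that are ever ON are exactly the points with an expansion
`2 ^ k₀ • e₀ + ⋯ + 2 ^ kᵣ • eᵣ`, where `k₀ < ⋯ < kᵣ`, each `eᵢ` is a signed basis vector and no
`eᵢ₊₁ = -eᵢ`; such a point turns ON at stage `1 + 2 ^ k₀ + ⋯ + 2 ^ kᵣ`. The expansion is unique
because its top term dominates the ℓ¹ norm. At that stage the only ON neighbour of the point is
its parent, where `2 ^ k₀ • e₀` becomes `(2 ^ k₀ - 1) • e₀ = ∑_{i < k₀} 2 ^ i • e₀`: another ON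
neighbour would have an expansion of smaller total differing from it by a unit vector, and
comparing top terms rules that out. Conversely, adding a unit vector to an expansion and
propagating carries either yields an expansion again or exhibits a second ON neighbour, so a
point with exactly one ON neighbour is ON at the next stage. Hence the cells born at stage
`m + 1` are the expansions whose exponents are the binary digits of `m`: there are `2d` choices
for `e₀` and `2d - 1` for each later `eᵢ`.
-/

open Finset

namespace UlamWarburton

variable {d : ℕ}

abbrev Dir (d : ℕ) := Fin d × ℤˣ

namespace Dir

def opp (c : Dir d) : Dir d := (c.1, -c.2)

def toVec (c : Dir d) : Fin d → ℤ := Pi.single c.1 (c.2 : ℤ)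

@[simp] lemma opp_fst (c : Dir d) : c.opp.1 = c.1 := rfl

@[simp] lemma opp_opp (c : Dir d) : c.opp.opp = c := by simp [opp]

lemma eq_opp_comm {c c' : Dir d} : c = c'.opp ↔ c' = c.opp := by
  constructor <;> rintro rfl <;> simp

lemma opp_ne_self (c : Dir d) : c.opp ≠ c := by
  rcases Int.units_eq_one_or c.2 with h | h <;> simp [opp, Prod.ext_iff, h, Units.ext_iff]

@[simp] lemma toVec_opp (c : Dir d) : c.opp.toVec = -c.toVec := by
  simp [toVec, opp, Pi.single_neg]

lemma eq_or_eq_opp_of_fst_eq {c c' : Dir d} (h : c'.1 = c.1) : c' = c ∨ c' = c.opp := by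
  rcases c with ⟨i, u⟩; rcases c' with ⟨i', u'⟩
  obtain rfl : i' = i := h
  rcases Int.units_eq_one_or u with rfl | rfl <;> rcases Int.units_eq_one_or u' with rfl | rfl <;>
    simp [opp]

lemma eq_of_one_le_mul_toVec {c σ : Dir d} (h : 1 ≤ (c.2 : ℤ) * σ.toVec c.1) : σ = c := by
  by_cases hax : σ.1 = c.1
  · rcases eq_or_eq_opp_of_fst_eq hax with rfl | rfl
    · rfl
    · rcases Int.units_eq_one_or c.2 with h2 | h2 <;> simp [toVec, opp, h2] at h
  · simp [toVec, Ne.symm hax] at h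

lemma toVec_injective : Function.Injective (toVec (d := d)) := fun c σ h =>
  (eq_of_one_le_mul_toVec <| by
    rw [← h]; rcases Int.units_eq_one_or c.2 with h2 | h2 <;> simp [toVec, h2]).symm

end Dir

lemma units_mul_le_abs (u : ℤˣ) (x : ℤ) : (u : ℤ) * x ≤ |x| := by
  rcases Int.units_eq_one_or u with rfl | rfl
  · simpa using le_abs_self x
  · simpa using neg_le_abs x

abbrev Digit (d : ℕ) := ℕ × Dir d

def value (L : List (Digit d)) : Fin d → ℤ := (L.map fun t => (2 ^ t.1 : ℤ) • t.2.toVec).sum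

def mass (L : List (Digit d)) : ℕ := (L.map fun t => (2 : ℕ) ^ t.1).sum

@[simp] lemma value_nil : value ([] : List (Digit d)) = 0 := rfl

@[simp] lemma value_cons (t : Digit d) (L : List (Digit d)) :
    value (t :: L) = (2 ^ t.1 : ℤ) • t.2.toVec + value L := by simp [value]

@[simp] lemma value_append (L M : List (Digit d)) : value (L ++ M) = value L + value M := by
  simp [value]

@[simp] lemma mass_nil : mass ([] : List (Digit d)) = 0 := rfl

@[simp] lemma mass_cons (t : Digit d) (L : List (Digit d)) : mass (t :: L) = 2 ^ t.1 + mass L := by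
  simp [mass]

@[simp] lemma mass_append (L M : List (Digit d)) : mass (L ++ M) = mass L + mass M := by
  simp [mass]

lemma mass_eq_sum_map_fst (L : List (Digit d)) : mass L = ((L.map Prod.fst).map (2 ^ ·)).sum := by
  simp [mass, Function.comp_def]

def l1 (p : Fin d → ℤ) : ℤ := ∑ i, |p i|

lemma abs_le_l1 (p : Fin d → ℤ) (i : Fin d) : |p i| ≤ l1 p :=
  single_le_sum (fun j _ => abs_nonneg (p j)) (mem_univ i)

lemma abs_add_abs_le_l1 (p : Fin d → ℤ) {i j : Fin d} (h : i ≠ j) : |p i| + |p j| ≤ l1 p := by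
  rw [l1, ← add_sum_erase _ _ (mem_univ i)]
  gcongr
  exact single_le_sum (fun k _ => abs_nonneg (p k)) (mem_erase.mpr ⟨h.symm, mem_univ j⟩)

lemma l1_add_le (p q : Fin d → ℤ) : l1 (p + q) ≤ l1 p + l1 q := by
  rw [l1, l1, l1, ← sum_add_distrib]
  exact sum_le_sum fun i _ => abs_add_le (p i) (q i)

lemma l1_smul_toVec (a : ℤ) (c : Dir d) : l1 (a • c.toVec) = |a| := by
  rw [l1, sum_eq_single c.1 (fun j _ hj => by simp [Dir.toVec, hj]) (by simp)]
  rcases Int.units_eq_one_or c.2 with h | h <;> simp [Dir.toVec, h]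

lemma l1_toVec (c : Dir d) : l1 c.toVec = 1 := by simpa using l1_smul_toVec 1 c

lemma l1_value_le_mass (L : List (Digit d)) : l1 (value L) ≤ mass L := by
  induction L with
  | nil => simp [l1]
  | cons t L ih =>
    have := l1_add_le ((2 ^ t.1 : ℤ) • t.2.toVec) (value L)
    rw [l1_smul_toVec, abs_of_pos (by positivity)] at this
    rw [value_cons, mass_cons]
    push_cast
    linarith

lemma eq_of_l1_smul_sub_toVec_lt {c σ : Dir d} {a : ℤ} (h : l1 (a • c.toVec - σ.toVec) < a) :
    σ = c := by
  apply Dir.eq_of_one_le_mul_toVec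
  have h1 := units_mul_le_abs c.2 ((a • c.toVec - σ.toVec) c.1)
  have h2 : (c.2 : ℤ) * (a • c.toVec - σ.toVec) c.1 = a - c.2 * σ.toVec c.1 := by
    simp [Dir.toVec, mul_sub, mul_left_comm (c.2 : ℤ)]
  linarith [abs_le_l1 (a • c.toVec - σ.toVec) c.1]

def Dominates (c : Dir d) (p : Fin d → ℤ) : Prop :=
  ∑ i ∈ univ.erase c.1, |p i| < c.2 * p c.1

namespace Dominates

variable {c c' : Dir d} {p q : Fin d → ℤ}

lemma abs_lt (h : Dominates c p) {i : Fin d} (hi : i ≠ c.1) : |p i| < |p c.1| :=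
  calc |p i| ≤ ∑ j ∈ univ.erase c.1, |p j| :=
        single_le_sum (fun j _ => abs_nonneg (p j)) (mem_erase.mpr ⟨hi, mem_univ i⟩)
    _ < c.2 * p c.1 := h
    _ ≤ |p c.1| := units_mul_le_abs _ _

lemma pos (h : Dominates c p) : 0 < (c.2 : ℤ) * p c.1 :=
  (sum_nonneg fun j _ => abs_nonneg (p j)).trans_lt h

lemma eq_of_l1_sub_le_one (hp : Dominates c p) (hq : Dominates c' q) (hpq : l1 (p - q) ≤ 1) :
    c = c' := by
  by_cases hax : c'.1 = c.1
  · rcases Dir.eq_or_eq_opp_of_fst_eq hax with rfl | rfl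
    · rfl
    -- `p c.1` and `q c.1` are nonzero of opposite signs, so they differ by at least 2
    have h1 := units_mul_le_abs c.2 (p c.1 - q c.1)
    have h2 := hq.pos
    have h3 := abs_le_l1 (p - q) c.1
    simp only [Dir.opp, Units.val_neg, neg_mul, Pi.sub_apply] at h2 h3
    linarith [hp.pos, mul_sub (c.2 : ℤ) (p c.1) (q c.1)]
  -- the integer gaps `|p c.1| > |p c'.1|` and `|q c'.1| > |q c.1|` cannot both flip within
  -- ℓ¹ distance 1
  · have h1 := abs_sub_abs_le_abs_sub (p c.1) (q c.1)
    have h2 := abs_sub_abs_le_abs_sub (q c'.1) (p c'.1)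
    have h3 := abs_add_abs_le_l1 (p - q) (Ne.symm hax)
    rw [abs_sub_comm (q c'.1)] at h2
    simp only [Pi.sub_apply] at h3
    linarith [hp.abs_lt hax, hq.abs_lt (Ne.symm hax)]

lemma lt_l1_add_smul (hp : Dominates c' p) (hc : c ≠ c'.opp) {a : ℤ} (ha : 0 ≤ a) :
    a < l1 (p + a • c.toVec) := by
  by_cases hax : c.1 = c'.1
  · obtain rfl : c = c' := (Dir.eq_or_eq_opp_of_fst_eq hax).resolve_right hc
    have h1 : (c.2 : ℤ) * (p + a • c.toVec) c.1 = c.2 * p c.1 + a := by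
      simp [Dir.toVec, mul_add, mul_left_comm (c.2 : ℤ)]
    have h2 := units_mul_le_abs c.2 ((p + a • c.toVec) c.1)
    linarith [hp.pos, abs_le_l1 (p + a • c.toVec) c.1]
  · have h1 : a ≤ |(p + a • c.toVec) c.1| + |p c.1| := by
      have hu : |a * c.2| = a := by
        rcases Int.units_eq_one_or c.2 with h | h <;> simp [h, abs_of_nonneg ha]
      have := abs_add_le ((p + a • c.toVec) c.1) (-p c.1)
      simpa [Dir.toVec, hu] using this
    have h2 := abs_add_abs_le_l1 (p + a • c.toVec) hax
    rw [show (p + a • c.toVec) c'.1 = p c'.1 by simp [Dir.toVec, Ne.symm hax]] at h2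
    linarith [hp.abs_lt hax]

end Dominates

lemma dominates_add_smul {p : Fin d → ℤ} {a : ℤ} (hp : l1 p < a) (c : Dir d) :
    Dominates c (p + a • c.toVec) := by
  have hoff : ∀ i ∈ univ.erase c.1, |(p + a • c.toVec) i| = |p i| := fun i hi => by
    simp [Dir.toVec, (mem_erase.mp hi).1]
  have hon : (c.2 : ℤ) * (p + a • c.toVec) c.1 = c.2 * p c.1 + a := by
    simp [Dir.toVec, mul_add, mul_left_comm (c.2 : ℤ)]
  have := units_mul_le_abs c.2 (-p c.1)
  rw [Dominates, sum_congr rfl hoff, hon]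
  rw [l1, ← add_sum_erase _ _ (mem_univ c.1), abs_neg] at *
  linarith

def Link (s t : Digit d) : Prop := s.1 < t.1 ∧ t.2 ≠ s.2.opp

instance : DecidableRel (Link (d := d)) := fun _ _ => inferInstanceAs (Decidable (_ ∧ _))

def IsValid (L : List (Digit d)) : Prop := L.IsChain Link

namespace IsValid

variable {L M : List (Digit d)} {k : ℕ} {c : Dir d}

lemma of_append (h : IsValid (L ++ M)) : IsValid L := (List.isChain_append.mp h).1

lemma tail {t : Digit d} (h : IsValid (t :: L)) : IsValid L := List.IsChain.tail h

lemma link_head {t : Digit d} (h : IsValid (t :: L)) : ∀ s ∈ L.head?, Link t s :=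
  (List.isChain_cons.mp h).1

lemma sortedLT_map_fst (h : IsValid L) : (L.map Prod.fst).SortedLT :=
  List.sortedLT_iff_isChain.mpr (List.isChain_map _ |>.mpr (h.imp fun _ _ hst => hst.1))

lemma bitIndices_mass (h : IsValid L) : (mass L).bitIndices = L.map Prod.fst := by
  rw [mass_eq_sum_map_fst, Nat.bitIndices_sum_map_two_pow h.sortedLT_map_fst]

lemma mass_lt (h : IsValid (L ++ [(k, c)])) : mass L < 2 ^ k := by
  have hlt : ∀ i ∈ L.map Prod.fst, i < k := by
    have := h.sortedLT_map_fst.pairwise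
    simp only [List.map_append, List.map_cons, List.map_nil, List.pairwise_append,
      List.mem_singleton] at this
    exact fun i hi => this.2.2 i hi k rfl
  refine Nat.lt_pow_two_of_testBit _ fun i hi => ?_
  by_contra hbit
  rw [Bool.not_eq_false, ← Nat.mem_bitIndices, h.of_append.bitIndices_mass] at hbit
  exact absurd (hlt i hbit) (by omega)

lemma mass_append_lt (h : IsValid (L ++ [(k, c)])) : mass (L ++ [(k, c)]) < 2 ^ (k + 1) := by
  have := h.mass_lt
  simp [pow_succ]
  omega

lemma l1_value_lt (h : IsValid (L ++ [(k, c)])) : l1 (value (L ++ [(k, c)])) < 2 ^ (k + 1) :=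
  (l1_value_le_mass _).trans_lt (by exact_mod_cast h.mass_append_lt)

lemma eq_append_of_mass_mem (hM : IsValid M) (h1 : 2 ^ k ≤ mass M) (h2 : mass M < 2 ^ (k + 1)) :
    ∃ M₀ c, M = M₀ ++ [(k, c)] := by
  rcases List.eq_nil_or_concat' M with rfl | ⟨M₀, ⟨k', c⟩, rfl⟩
  · simp at h1
  have h3 : 2 ^ k' ≤ mass (M₀ ++ [(k', c)]) := by simp
  have h4 := h3.trans_lt h2
  have h5 := h1.trans_lt hM.mass_append_lt
  rw [Nat.pow_lt_pow_iff_right (by norm_num)] at h4 h5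
  exact ⟨M₀, c, by rw [show k' = k by omega]⟩

lemma dominates (h : IsValid (L ++ [(k, c)])) : Dominates c (value (L ++ [(k, c)])) := by
  have := (l1_value_le_mass L).trans_lt (by exact_mod_cast h.mass_lt : (mass L : ℤ) < 2 ^ k)
  simpa using dominates_add_smul this c

lemma pow_lt_l1_value {s : Digit d} (h : IsValid (L ++ [s, (k, c)])) :
    2 ^ k < l1 (value (L ++ [s, (k, c)])) := by
  have hs : IsValid (L ++ [s]) := of_append (M := [(k, c)]) (by simpa using h)
  have hc : c ≠ s.2.opp := (List.isChain_cons_cons.mp (List.isChain_append.mp h).2.1).1.2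
  have := (hs.dominates (k := s.1) (c := s.2)).lt_l1_add_smul hc (a := 2 ^ k) (by positivity)
  simpa [add_assoc] using this

lemma pow_le_l1_value (h : IsValid (L ++ [(k, c)])) : 2 ^ k ≤ l1 (value (L ++ [(k, c)])) := by
  rcases List.eq_nil_or_concat' L with rfl | ⟨L₀, s, rfl⟩
  · simp only [List.nil_append, value_cons, value_nil, add_zero, l1_smul_toVec]
    simp
  · simpa using (pow_lt_l1_value (L := L₀) (s := s) (by simpa using h)).le

lemma eq_of_value_eq {L' : List (Digit d)} (hL : IsValid L) (hL' : IsValid L')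
    (h : value L = value L') : L = L' := by
  induction L using List.reverseRecOn generalizing L' with
  | nil =>
    rcases List.eq_nil_or_concat' L' with rfl | ⟨L₀, ⟨k, c⟩, rfl⟩
    · rfl
    have := hL'.pow_le_l1_value
    simp [← h, l1] at this
    exact absurd this (not_le.mpr (by positivity))
  | append_singleton L t ih =>
    obtain ⟨k, c⟩ := t
    rcases List.eq_nil_or_concat' L' with rfl | ⟨L₀, ⟨k', c'⟩, rfl⟩
    · have := hL.pow_le_l1_value
      simp [h, l1] at this
      exact absurd this (not_le.mpr (by positivity))
    obtain rfl : k = k' := by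
      have h1 := hL.pow_le_l1_value.trans_lt (h ▸ hL'.l1_value_lt)
      have h2 := hL'.pow_le_l1_value.trans_lt (h ▸ hL.l1_value_lt)
      rw [pow_lt_pow_iff_right₀ (by norm_num)] at h1 h2
      omega
    obtain rfl : c = c' := hL.dominates.eq_of_l1_sub_le_one hL'.dominates (by simp [h, l1])
    simp only [value_append, add_left_inj] at h
    rw [ih hL.of_append hL'.of_append h]

lemma eq_nil_of_mass_lt {σ : Dir d} (hL : IsValid (L ++ [(k, c)]))
    (hval : value M = value (L ++ [(k, c)]) - σ.toVec) (hmass : mass M < 2 ^ k) :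
    L = [] ∧ σ = c ∧ mass M + 1 = 2 ^ k := by
  have hM : l1 (value M) + 1 ≤ 2 ^ k := by
    have : (mass M : ℤ) < 2 ^ k := by exact_mod_cast hmass
    linarith [l1_value_le_mass M]
  obtain rfl : L = [] := by
    rcases List.eq_nil_or_concat' L with rfl | ⟨L₀, s, rfl⟩
    · rfl
    have h1 := pow_lt_l1_value (L := L₀) (s := s) (by simpa using hL)
    have h2 := l1_add_le (value M) σ.toVec
    rw [l1_toVec, eq_sub_iff_add_eq.mp hval] at h2
    simp only [List.append_assoc, List.cons_append, List.nil_append] at h1 h2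
    linarith
  simp only [List.nil_append, value_cons, value_nil, add_zero] at hval
  obtain rfl : σ = c := eq_of_l1_smul_sub_toVec_lt (by rw [← hval]; linarith)
  have h1 : l1 (value M) = 2 ^ k - 1 := by
    rw [hval, show (2 ^ k : ℤ) • σ.toVec - σ.toVec = (2 ^ k - 1 : ℤ) • σ.toVec by module,
      l1_smul_toVec, abs_of_nonneg (sub_nonneg.mpr (one_le_pow₀ (by norm_num)))]
  refine ⟨rfl, rfl, ?_⟩
  have : (mass M : ℤ) + 1 = 2 ^ k := by linarith [l1_value_le_mass M]
  exact_mod_cast this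

/-- A neighbour of `value L` with an expansion of smaller mass is the parent of `value L`. -/
theorem head_eq_of_value_sub {σ : Dir d} (hL : IsValid L) (hM : IsValid M)
    (hval : value M = value L - σ.toVec) (hmass : mass M < mass L) :
    mass M + 1 = mass L ∧ ∃ k, L.head? = some (k, σ) := by
  induction L using List.reverseRecOn generalizing M with
  | nil => simp at hmass
  | append_singleton L t ih =>
    obtain ⟨k, c⟩ := t
    by_cases hsmall : mass M < 2 ^ k
    · obtain ⟨rfl, rfl, h⟩ := hL.eq_nil_of_mass_lt hval hsmall
      simpa using h
    obtain ⟨M₀, c', rfl⟩ := hM.eq_append_of_mass_mem (not_lt.mp hsmall)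
      (hmass.trans hL.mass_append_lt)
    obtain rfl : c = c' := hL.dominates.eq_of_l1_sub_le_one hM.dominates
      (by rw [hval, sub_sub_cancel, l1_toVec])
    simp only [value_append, mass_append] at hval hmass
    obtain ⟨h1, k₀, h2⟩ := ih hL.of_append hM.of_append (by linear_combination hval) (by omega)
    refine ⟨by simp; omega, k₀, ?_⟩
    rw [List.head?_append, h2]
    rfl

end IsValid

def run (lo n : ℕ) (c : Dir d) : List (Digit d) := (List.range' lo n).map (·, c)

@[simp] lemma run_zero (lo : ℕ) (c : Dir d) : run lo 0 c = [] := rfl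

lemma run_succ (lo n : ℕ) (c : Dir d) : run lo (n + 1) c = (lo, c) :: run (lo + 1) n c := by
  simp [run, List.range'_succ]

lemma value_run (lo n : ℕ) (c : Dir d) :
    value (run lo n c) = ((2 : ℤ) ^ (lo + n) - 2 ^ lo) • c.toVec := by
  induction n generalizing lo with
  | zero => simp
  | succ n ih =>
    rw [run_succ, value_cons, ih, show lo + 1 + n = lo + (n + 1) by omega, pow_succ]
    module

lemma mass_run (lo n : ℕ) (c : Dir d) : mass (run lo n c) + 2 ^ lo = 2 ^ (lo + n) := by
  induction n generalizing lo with
  | zero => simp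
  | succ n ih =>
    rw [run_succ, mass_cons, show lo + (n + 1) = lo + 1 + n by omega, ← ih (lo + 1), pow_succ]
    ring

lemma isValid_run_append {T : List (Digit d)} (hT : IsValid T) {lo n : ℕ} {c : Dir d}
    (h : ∀ t ∈ T.head?, lo + n ≤ t.1 ∧ t.2 ≠ c.opp) : IsValid (run lo n c ++ T) := by
  induction n generalizing lo with
  | zero => simpa using hT
  | succ n ih =>
    rw [run_succ, List.cons_append]
    refine List.isChain_cons.mpr ⟨?_, ih fun t ht => ⟨by have := (h t ht).1; omega, (h t ht).2⟩⟩
    rcases n with _ | n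
    · exact fun t ht => ⟨by have := (h t ht).1; omega, (h t ht).2⟩
    · simp [run_succ, Link, (Dir.opp_ne_self c).symm]

namespace IsValid

variable {T : List (Digit d)} {k : ℕ} {c : Dir d}

lemma exists_parent (h : IsValid ((k, c) :: T)) :
    ∃ N, IsValid N ∧ value N = value ((k, c) :: T) - c.toVec ∧ mass N < mass ((k, c) :: T) := by
  refine ⟨run 0 k c ++ T, isValid_run_append h.tail fun t ht => ?_, ?_, ?_⟩
  · have := h.link_head t ht
    exact ⟨by simpa using this.1.le, this.2⟩
  · simp only [value_append, value_run, value_cons]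
    module
  · have := mass_run 0 k c
    simp only [mass_append, mass_cons, zero_add, pow_zero] at this ⊢
    omega

lemma exists_add_pow_smul (hT : IsValid T) {j : ℕ} (hj : ∀ t ∈ T.head?, j < t.1) (c : Dir d) :
    ∃ N, IsValid N ∧ (∀ t ∈ N.head?, t.1 = j ∧ t.2.1 = c.1) ∧
      value N = value T + (2 ^ j : ℤ) • c.toVec ∧ mass N ≤ mass T + 2 ^ j := by
  rcases T with _ | ⟨⟨k, c'⟩, T⟩
  · exact ⟨[(j, c)], List.isChain_singleton _, by simp, by simp [add_comm], by simp⟩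
  have hjk : j < k := hj _ rfl
  by_cases hc' : c' = c.opp
  · -- `2 ^ j • c + 2 ^ k • (-c) = ∑_{j ≤ i < k} 2 ^ i • (-c)`
    subst hc'
    refine ⟨run j (k - j) c.opp ++ T, isValid_run_append hT.tail fun t ht => ?_, ?_, ?_, ?_⟩
    · have := hT.link_head t ht
      exact ⟨by have := this.1; simp at this; omega, by simpa using this.2⟩
    · obtain ⟨n, hn⟩ : ∃ n, k - j = n + 1 := ⟨k - j - 1, by omega⟩
      simp [hn, run_succ]
    · rw [value_append, value_run, value_cons, Dir.toVec_opp, show j + (k - j) = k by omega]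
      module
    · have := mass_run j (k - j) c.opp
      rw [show j + (k - j) = k by omega] at this
      simp only [mass_append, mass_cons]
      have := Nat.two_pow_pos j
      omega
  · refine ⟨(j, c) :: (k, c') :: T, List.isChain_cons_cons.mpr ⟨⟨hjk, hc'⟩, hT⟩, by simp, ?_, ?_⟩
    · rw [value_cons]; abel
    · simp only [mass_cons]; omega

theorem exists_add_pow_smul_or_exists_sub_toVec {W : List (Digit d)} (hW : IsValid W) {j : ℕ}
    (hj : ∀ t ∈ W.head?, j ≤ t.1) (c : Dir d) :
    (∃ N, IsValid N ∧ value N = value W + (2 ^ j : ℤ) • c.toVec) ∨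
      ∃ τ : Dir d, τ.1 ≠ c.1 ∧ ∃ N, IsValid N ∧
        value N = value W + (2 ^ j : ℤ) • c.toVec - τ.toVec ∧ mass N + 1 ≤ mass W + 2 ^ j := by
  induction W generalizing j with
  | nil => exact .inl ⟨[(j, c)], List.isChain_singleton _, by simp⟩
  | cons t W ih =>
    obtain ⟨k, c'⟩ := t
    rcases (hj _ rfl).lt_or_eq with hjk | rfl
    · obtain ⟨N, hN, -, hval, -⟩ := hW.exists_add_pow_smul (by simpa using hjk) c
      exact .inl ⟨N, hN, hval⟩
    have hW' : ∀ t ∈ W.head?, j + 1 ≤ t.1 := fun t ht => (hW.link_head t ht).1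
    by_cases hax : c'.1 = c.1
    · rcases Dir.eq_or_eq_opp_of_fst_eq hax with rfl | rfl
      · rcases ih hW.tail hW' with ⟨N, hN, hval⟩ | ⟨τ, hτ, N, hN, hval, hmass⟩
        · exact .inl ⟨N, hN, by rw [hval, value_cons, pow_succ]; module⟩
        · refine .inr ⟨τ, hτ, N, hN, by rw [hval, value_cons, pow_succ]; module, ?_⟩
          simp only [mass_cons, pow_succ] at hmass ⊢
          omega
      · exact .inl ⟨W, hW.tail, by simp⟩
    -- `2 ^ j • c' + 2 ^ j • c - c' = ∑_{i < j} 2 ^ i • c' + 2 ^ j • c`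
    obtain ⟨N, hN, hhead, hval, hmass⟩ := hW.tail.exists_add_pow_smul hW' c
    refine .inr ⟨c', hax, run 0 j c' ++ N, isValid_run_append hN fun s hs => ?_, ?_, ?_⟩
    · refine ⟨by simp [(hhead s hs).1], fun h => hax ?_⟩
      rw [← (hhead s hs).2, h, Dir.opp_fst]
    · rw [value_append, value_run, hval, value_cons]
      module
    · have := mass_run 0 j c'
      simp only [mass_append, mass_cons, zero_add, pow_zero] at this ⊢
      omega

end IsValid

lemma isNbr_iff {p q : Fin d → ℤ} : isNbr d p q ↔ ∃ σ : Dir d, q = p + σ.toVec := by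
  have key (i : Fin d) (u : ℤˣ) : Function.update p i (p i + u) = p + Dir.toVec (i, u) := by
    ext j
    by_cases hj : j = i
    · subst hj; simp [Dir.toVec]
    · simp [Dir.toVec, hj]
  constructor
  · rintro ⟨i, rfl | rfl⟩
    · exact ⟨(i, 1), by simpa using key i 1⟩
    · exact ⟨(i, -1), by simpa [sub_eq_add_neg] using key i (-1)⟩
  · rintro ⟨⟨i, u⟩, rfl⟩
    refine ⟨i, ?_⟩
    rcases Int.units_eq_one_or u with rfl | rfl
    · exact .inl (by simpa using (key i 1).symm)
    · exact .inr (by simpa [sub_eq_add_neg] using (key i (-1)).symm)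

def onSet (d n : ℕ) : Set (Fin d → ℤ) := {p | ∃ L, IsValid L ∧ mass L < n ∧ value L = p}

lemma onSet_mono : Monotone (onSet d) := fun _ _ hmn _ ⟨L, hL, hlt, hval⟩ =>
  ⟨L, hL, hlt.trans_le hmn, hval⟩

lemma onSet_one : onSet d 1 = {0} := by
  ext p
  constructor
  · rintro ⟨_ | ⟨t, L⟩, -, hmass, rfl⟩
    · rfl
    · simp at hmass
  · rintro rfl
    exact ⟨[], List.isChain_nil, by simp, rfl⟩

lemma mem_onSet_succ_diff {m : ℕ} {p : Fin d → ℤ} :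
    p ∈ onSet d (m + 1) \ onSet d m ↔ ∃ L, IsValid L ∧ mass L = m ∧ value L = p := by
  constructor
  · rintro ⟨⟨L, hL, hlt, rfl⟩, hnot⟩
    refine ⟨L, hL, ?_, rfl⟩
    by_contra hne
    exact hnot ⟨L, hL, by omega, rfl⟩
  · rintro ⟨L, hL, rfl, rfl⟩
    refine ⟨⟨L, hL, by omega, rfl⟩, ?_⟩
    rintro ⟨L', hL', hlt, hval⟩
    rw [hL'.eq_of_value_eq hL hval] at hlt
    exact lt_irrefl _ hlt

lemma IsValid.existsUnique_isNbr {L : List (Digit d)} (hL : IsValid L) (hne : L ≠ []) :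
    ∃! q, isNbr d (value L) q ∧ q ∈ onSet d (mass L) := by
  obtain ⟨⟨k, c⟩, T, rfl⟩ := List.exists_cons_of_ne_nil hne
  obtain ⟨N, hN, hval, hmass⟩ := hL.exists_parent
  refine ⟨value N, ⟨isNbr_iff.mpr ⟨c.opp, by simp [hval, sub_eq_add_neg]⟩, N, hN, hmass, rfl⟩, ?_⟩
  rintro q ⟨hq, M, hM, hMmass, rfl⟩
  obtain ⟨σ, hσ⟩ := isNbr_iff.mp hq
  obtain ⟨-, k', hk'⟩ := hL.head_eq_of_value_sub hM (σ := σ.opp) (by simp [hσ]) hMmass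
  obtain rfl : σ.opp = c := by simp at hk'; exact hk'.2.symm
  simp [hσ, hval, sub_eq_add_neg]

lemma mem_onSet_succ_of_existsUnique {n : ℕ} {p : Fin d → ℤ}
    (h : ∃! q, isNbr d p q ∧ q ∈ onSet d n) : p ∈ onSet d (n + 1) := by
  obtain ⟨q, ⟨hq, M, hM, hMmass, rfl⟩, huniq⟩ := h
  obtain ⟨σ, hσ⟩ := isNbr_iff.mp hq
  have hp : p = value M + (2 ^ 0 : ℤ) • σ.opp.toVec := by simp [hσ]
  rcases hM.exists_add_pow_smul_or_exists_sub_toVec (j := 0) (fun _ _ => Nat.zero_le _) σ.opp with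
    ⟨N, hN, hval⟩ | ⟨τ, hτ, N, hN, hval, hmass⟩
  · refine ⟨N, hN, ?_, by rw [hval, hp]⟩
    by_contra! hbig
    have := (hN.head_eq_of_value_sub hM (σ := σ.opp) (by simp [hval]) (by omega)).1
    omega
  · have hnbr : isNbr d p (value N) := isNbr_iff.mpr ⟨τ.opp, by simp [hval, hp, sub_eq_add_neg]⟩
    have := huniq _ ⟨hnbr, N, hN, by simp at hmass; omega, rfl⟩
    rw [hval, ← hp, hσ, sub_eq_add_neg, add_right_inj, ← Dir.toVec_opp] at this
    exact (hτ (by simp [← Dir.toVec_injective this])).elim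

lemma mem_onSet_succ_iff {n : ℕ} (hn : 1 ≤ n) {p : Fin d → ℤ} :
    p ∈ onSet d (n + 1) ↔ p ∈ onSet d n ∨ (p ∉ onSet d n ∧ ∃! q, isNbr d p q ∧ q ∈ onSet d n) := by
  constructor
  · intro hp
    by_cases hpn : p ∈ onSet d n
    · exact .inl hpn
    obtain ⟨L, hL, rfl, rfl⟩ := mem_onSet_succ_diff.mp ⟨hp, hpn⟩
    exact .inr ⟨hpn, hL.existsUnique_isNbr (by rintro rfl; simp at hn)⟩
  · rintro (hp | ⟨-, hp⟩)
    · exact onSet_mono n.le_succ hp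
    · exact mem_onSet_succ_of_existsUnique hp

theorem coe_eq_onSet (S : ℕ → Finset (Fin d → ℤ)) (hS1 : S 1 = {fun _ => (0 : ℤ)})
    (hstep : ∀ n, 1 ≤ n → ∀ p : Fin d → ℤ,
      p ∈ S (n + 1) ↔ p ∈ S n ∨ (p ∉ S n ∧ ∃! q, isNbr d p q ∧ q ∈ S n))
    {n : ℕ} (hn : 1 ≤ n) : (S n : Set (Fin d → ℤ)) = onSet d n := by
  induction n, hn using Nat.le_induction with
  | base => rw [hS1, onSet_one, coe_singleton]; rfl
  | succ n hn ih =>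
    ext p
    rw [mem_coe, hstep n hn p, mem_onSet_succ_iff hn, ← ih]
    simp only [mem_coe]

def validWithExponents (d : ℕ) : List ℕ → Finset (List (Digit d))
  | [] => {[]}
  | k :: ks => (validWithExponents d ks).biUnion fun M =>
      (univ.filter fun c => ∀ t ∈ M.head?, Link (k, c) t).image fun c => (k, c) :: M

lemma mem_validWithExponents {ks : List ℕ} {L : List (Digit d)} :
    L ∈ validWithExponents d ks ↔ IsValid L ∧ L.map Prod.fst = ks := by
  induction ks generalizing L with
  | nil =>
    simp only [validWithExponents, mem_singleton, List.map_eq_nil_iff]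
    exact ⟨fun h => ⟨h ▸ List.isChain_nil, h⟩, And.right⟩
  | cons k ks ih =>
    rcases L with _ | ⟨⟨k', c⟩, L⟩
    · simp [validWithExponents]
    simp only [validWithExponents, mem_biUnion, mem_image, mem_filter, mem_univ, true_and, ih,
      IsValid, List.isChain_cons, List.map_cons, List.cons.injEq, Prod.mk.injEq]
    constructor
    · rintro ⟨_, ⟨hL, rfl⟩, _, hlink, ⟨rfl, rfl⟩, rfl⟩
      exact ⟨⟨hlink, hL⟩, rfl, rfl⟩
    · rintro ⟨⟨hlink, hL⟩, rfl, rfl⟩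
      exact ⟨L, ⟨hL, rfl⟩, c, hlink, ⟨rfl, rfl⟩, rfl⟩

lemma card_dir : Fintype.card (Dir d) = 2 * d := by
  simp [Fintype.card_units_int, mul_comm]

lemma card_filter_link {k : ℕ} {t : Digit d} (hk : k < t.1) :
    #(univ.filter fun c : Dir d => Link (k, c) t) = 2 * d - 1 := by
  have : (univ.filter fun c : Dir d => Link (k, c) t) = univ.erase t.2.opp := by
    ext c
    simpa [Link, hk] using not_congr Dir.eq_opp_comm
  rw [this, card_erase_of_mem (mem_univ _), card_univ, card_dir]

lemma card_validWithExponents {ks : List ℕ} (hks : ks.IsChain (· < ·)) (hne : ks ≠ []) :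
    #(validWithExponents d ks) = 2 * d * (2 * d - 1) ^ (ks.length - 1) := by
  induction ks with
  | nil => contradiction
  | cons k ks ih =>
    have hinj (M : List (Digit d)) : Function.Injective fun c : Dir d => (k, c) :: M :=
      fun c c' h => by simpa using h
    rw [validWithExponents, card_biUnion]
    swap
    · intro M₁ _ M₂ _ hne
      simp only [Function.onFun, disjoint_left, mem_image]
      rintro _ ⟨c₁, -, rfl⟩ ⟨c₂, -, h⟩
      exact hne (List.cons.inj h).2.symm
    rcases ks with _ | ⟨k', ks⟩
    · simp [validWithExponents, card_image_of_injective _ (hinj []), mul_comm]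
    have hfibre : ∀ M ∈ validWithExponents d (k' :: ks),
        #((univ.filter fun c => ∀ t ∈ M.head?, Link (k, c) t).image fun c => (k, c) :: M) =
          2 * d - 1 := by
      intro M hM
      obtain ⟨t, M, rfl⟩ : ∃ t M', M = t :: M' := by
        rcases M with _ | ⟨t, M⟩
        · simp [mem_validWithExponents] at hM
        · exact ⟨t, M, rfl⟩
      obtain ⟨rfl, -⟩ := List.cons.inj (mem_validWithExponents.mp hM).2
      rw [card_image_of_injective _ (hinj _)]
      simpa using card_filter_link (List.isChain_cons_cons.mp hks).1
    rw [sum_congr rfl hfibre, sum_const, smul_eq_mul, ih hks.tail (List.cons_ne_nil _ _)]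
    simp [pow_succ]
    ring

lemma length_bitIndices (n : ℕ) : n.bitIndices.length = wt n := by
  induction n using Nat.strong_induction_on with
  | _ n ih =>
    rcases Nat.eq_zero_or_pos n with rfl | hn
    · simp [wt]
    rw [wt, Nat.digits_def' (by norm_num) hn, List.sum_cons, ← wt, ← ih (n / 2) (by omega)]
    rcases Nat.even_or_odd' n with ⟨m, rfl | rfl⟩
    · simp
    · rw [show (2 * m + 1) / 2 = m by omega, Nat.bitIndices_two_mul_add_one]
      simp [add_comm]

lemma mem_validWithExponents_bitIndices {m : ℕ} {L : List (Digit d)} :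
    L ∈ validWithExponents d m.bitIndices ↔ IsValid L ∧ mass L = m := by
  rw [mem_validWithExponents]
  constructor
  · rintro ⟨hL, hks⟩
    exact ⟨hL, by rw [mass_eq_sum_map_fst, hks, Nat.sum_map_two_pow_bitIndices]⟩
  · rintro ⟨hL, rfl⟩
    exact ⟨hL, hL.bitIndices_mass.symm⟩

def born (d m : ℕ) : Finset (Fin d → ℤ) := (validWithExponents d m.bitIndices).image value

lemma coe_born (m : ℕ) : (born d m : Set (Fin d → ℤ)) = onSet d (m + 1) \ onSet d m := by
  ext p
  rw [mem_onSet_succ_diff]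
  simp [born, mem_validWithExponents_bitIndices, and_assoc]

lemma card_born {m : ℕ} (hm : m ≠ 0) : #(born d m) = 2 * d * (2 * d - 1) ^ (wt m - 1) := by
  have hne : m.bitIndices ≠ [] := fun h => hm (by rw [← Nat.sum_map_two_pow_bitIndices m, h]; rfl)
  rw [born, card_image_of_injOn, card_validWithExponents Nat.bitIndices_sorted.isChain hne,
    length_bitIndices]
  intro L hL L' hL' h
  exact (mem_validWithExponents_bitIndices.mp hL).1.eq_of_value_eq
    (mem_validWithExponents_bitIndices.mp hL').1 h

end UlamWarburton

theorem ulam_warburton_dim_d_general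
    (d : ℕ)
    (S : ℕ → Finset (Fin d → ℤ))
    (hS0 : S 0 = ∅)
    (hS1 : S 1 = {fun _ => (0 : ℤ)})
    (hstep : ∀ n, 1 ≤ n → ∀ p : Fin d → ℤ,
      p ∈ S (n + 1) ↔ p ∈ S n ∨ (p ∉ S n ∧ ∃! q, isNbr d p q ∧ q ∈ S n))
    (u : ℕ → ℕ)
    (hu0 : u 0 = 0)
    (hu : ∀ n, 1 ≤ n → u n = (S n).card - (S (n - 1)).card) :
    u 0 = 0 ∧ u 1 = 1 ∧
      ∀ n, 2 ≤ n → u n = 2 * d * (2 * d - 1) ^ (wt (n - 1) - 1) := by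
  refine ⟨hu0, by simp [hu 1 le_rfl, hS0, hS1], fun n hn => ?_⟩
  obtain ⟨m, rfl⟩ : ∃ m, n = m + 1 := ⟨n - 1, by omega⟩
  have hborn : S (m + 1) \ S m = UlamWarburton.born d m := by
    apply Finset.coe_injective
    rw [Finset.coe_sdiff, UlamWarburton.coe_born, UlamWarburton.coe_eq_onSet S hS1 hstep (by omega),
      UlamWarburton.coe_eq_onSet S hS1 hstep (by omega)]
  have hmono : S m ⊆ S (m + 1) := fun p hp => (hstep m (by omega) p).mpr (.inl hp)
  rw [hu _ (by omega), Nat.add_sub_cancel, ← Finset.card_sdiff_of_subset hmono, hborn,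
    UlamWarburton.card_born (by omega)]

/-- **(EqUWd).** For the `d`-dimensional Ulam-Warburton cellular automaton on
`ℤ^d` (`d ≥ 1`), the number `u n` of cells turned ON at stage `n` satisfies
`u 0 = 0`, `u 1 = 1`, and, for every `n ≥ 2`,
`u n = 2d (2d - 1)^(wt (n-1) - 1)`. -/
theorem ulam_warburton_dim_d
    (d : ℕ) (hd : 1 ≤ d)
    (S : ℕ → Finset (Fin d → ℤ))
    (hS0 : S 0 = ∅)
    (hS1 : S 1 = {fun _ => (0 : ℤ)})
    (hstep : ∀ n, 1 ≤ n → ∀ p : Fin d → ℤ,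
      p ∈ S (n + 1) ↔ p ∈ S n ∨ (p ∉ S n ∧ ∃! q, isNbr d p q ∧ q ∈ S n))
    (u : ℕ → ℕ)
    (hu0 : u 0 = 0)
    (hu : ∀ n, 1 ≤ n → u n = (S n).card - (S (n - 1)).card) :
    u 0 = 0 ∧ u 1 = 1 ∧
      ∀ n, 2 ≤ n → u n = 2 * d * (2 * d - 1) ^ (wt (n - 1) - 1) :=
  ulam_warburton_dim_d_general d S hS0 hS1 hstep u hu0 hu
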